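/- Let W ∈ ℝ^{n×m} define a gauged RBM (the all-ones configuration (𝟙,𝟙) minimizes E_W) with ground state energy E0 = −∑_{i,j} W_{ij} < 0. If the learning rate satisfies 0 < γ < −2E0/(nm), then the mode-informed update W'_{ij} = W_{ij} − γ strictly decreases the variance of the energies over all configurations: Var(E_{W'}) < Var(E_W), where the variance is with respect to the uniform distribution on {−1,1}^n × {−1,1}^m. -/

import Mathlib

open Finset

/-- The energy of an unbiased `(n,m)`-RBM with weights `W` at a `±1`
configuration encoded by Booleans (`true ↦ +1`, `false ↦ −1`). -/
noncomputable def rbmEnergyB (n m : ℕ) (W : Fin n → Fin m → ℝ)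
    (s : (Fin n → Bool) × (Fin m → Bool)) : ℝ :=
  -(∑ i : Fin n, ∑ j : Fin m,
      W i j * (if s.1 i then (1 : ℝ) else -1) * (if s.2 j then (1 : ℝ) else -1))

/-- Variance of a function on the configuration space, with respect to the
uniform probability measure on the `2^(n+m)` configurations. -/
noncomputable def uniformVariance (n m : ℕ)
    (f : (Fin n → Bool) × (Fin m → Bool) → ℝ) : ℝ :=
  (∑ s : (Fin n → Bool) × (Fin m → Bool), f s ^ 2) /
      (Fintype.card ((Fin n → Bool) × (Fin m → Bool)) : ℝ) -
    ((∑ s : (Fin n → Bool) × (Fin m → Bool), f s) /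
      (Fintype.card ((Fin n → Bool) × (Fin m → Bool)) : ℝ)) ^ 2

noncomputable def sg (b : Bool) : ℝ := if b then 1 else -1

lemma sg_not (b : Bool) : sg (!b) = - sg b := by cases b <;> simp [sg]
lemma sg_sq (b : Bool) : sg b * sg b = 1 := by cases b <;> norm_num [sg]

def flipAt {k : ℕ} (i : Fin k) : (Fin k → Bool) ≃ (Fin k → Bool) :=
  Function.Involutive.toPerm (fun v => Function.update v i (!v i)) (by
    intro v; funext j
    by_cases h : j = i <;> simp [Function.update, h])

lemma sum_flip {k : ℕ} (i : Fin k) (F : (Fin k → Bool) → ℝ)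
    (hF : ∀ v, F (Function.update v i (!v i)) = - F v) :
    ∑ v : Fin k → Bool, F v = 0 := by
  have h := Equiv.sum_comp (flipAt i) F
  simp only [flipAt, Function.Involutive.coe_toPerm, Function.Involutive.toPerm, Equiv.coe_fn_mk] at h
  simp only [hF, Finset.sum_neg_distrib] at h
  linarith

lemma sum_sg_single {k : ℕ} (i : Fin k) : ∑ v : Fin k → Bool, sg (v i) = 0 := by
  apply sum_flip i
  intro v
  simp [Function.update, sg_not]

lemma sum_sg_pair {k : ℕ} (i j : Fin k) :
    ∑ v : Fin k → Bool, sg (v i) * sg (v j) =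
      if i = j then (2 : ℝ) ^ k else 0 := by
  by_cases h : i = j
  · subst h
    simp only [sg_sq, if_true]
    simp [Finset.card_univ]
  · rw [if_neg h]
    apply sum_flip i
    intro v
    rw [Function.update_self, Function.update_of_ne (Ne.symm h), sg_not]
    ring

lemma L0 {k : ℕ} (c : Fin k → ℝ) :
    ∑ v : Fin k → Bool, (∑ i, c i * sg (v i)) = 0 := by
  rw [Finset.sum_comm]
  apply Finset.sum_eq_zero
  intro i _
  rw [← Finset.mul_sum, sum_sg_single, mul_zero]

lemma Lsq {k : ℕ} (c : Fin k → ℝ) :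
    ∑ v : Fin k → Bool, (∑ i, c i * sg (v i)) ^ 2 = 2 ^ k * ∑ i, (c i) ^ 2 := by
  have expand : ∀ v : Fin k → Bool,
      (∑ i, c i * sg (v i)) ^ 2 =
        ∑ i, ∑ j, (c i * c j) * (sg (v i) * sg (v j)) := by
    intro v
    rw [sq, Finset.sum_mul_sum]
    apply Finset.sum_congr rfl; intro i _
    apply Finset.sum_congr rfl; intro j _
    ring
  simp only [expand]
  rw [Finset.sum_comm]
  have : ∀ i : Fin k,
      ∑ v : Fin k → Bool, ∑ j, (c i * c j) * (sg (v i) * sg (v j))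
        = 2 ^ k * (c i) ^ 2 := by
    intro i
    rw [Finset.sum_comm]
    have : ∀ j : Fin k,
        ∑ v : Fin k → Bool, (c i * c j) * (sg (v i) * sg (v j))
          = if i = j then 2 ^ k * (c i)^2 else 0 := by
      intro j
      rw [← Finset.mul_sum, sum_sg_pair]
      by_cases h : i = j <;> simp [h] <;> ring
    simp only [this]
    rw [Finset.sum_ite_eq univ i (fun _ => (2:ℝ)^k * (c i)^2)]
    simp
  simp only [this]
  rw [← Finset.mul_sum]

lemma energy_eq (n m : ℕ) (W : Fin n → Fin m → ℝ) (v : Fin n → Bool) (h : Fin m → Bool) :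
    rbmEnergyB n m W (v, h) = -(∑ j, (∑ i, W i j * sg (v i)) * sg (h j)) := by
  simp only [rbmEnergyB, sg]
  rw [Finset.sum_comm]
  congr 1
  exact Finset.sum_congr rfl fun j _ => (Finset.sum_mul _ _ _).symm

lemma energy_mean (n m : ℕ) (W : Fin n → Fin m → ℝ) :
    ∑ s : (Fin n → Bool) × (Fin m → Bool), rbmEnergyB n m W s = 0 := by
  rw [Fintype.sum_prod_type]
  apply Finset.sum_eq_zero
  intro v _
  simp only [energy_eq, Finset.sum_neg_distrib, L0, neg_zero]

lemma energy_sq (n m : ℕ) (W : Fin n → Fin m → ℝ) :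
    ∑ s : (Fin n → Bool) × (Fin m → Bool), rbmEnergyB n m W s ^ 2 =
      2 ^ (n + m) * ∑ i, ∑ j, (W i j) ^ 2 := by
  rw [Fintype.sum_prod_type]
  have step1 : ∀ v : Fin n → Bool,
      ∑ h : Fin m → Bool, rbmEnergyB n m W (v, h) ^ 2 =
        2 ^ m * ∑ j, (∑ i, W i j * sg (v i)) ^ 2 := by
    intro v
    simp only [energy_eq, neg_sq]
    exact Lsq _
  simp only [step1]
  rw [← Finset.mul_sum, Finset.sum_comm]
  have step2 : ∀ j : Fin m,
      ∑ v : Fin n → Bool, (∑ i, W i j * sg (v i)) ^ 2 = 2 ^ n * ∑ i, (W i j) ^ 2 :=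
    fun j => Lsq _
  simp only [step2]
  rw [← Finset.mul_sum, Finset.sum_comm, pow_add]
  ring

lemma variance_eq (n m : ℕ) (W : Fin n → Fin m → ℝ) :
    uniformVariance n m (rbmEnergyB n m W) = ∑ i, ∑ j, (W i j) ^ 2 := by
  have hcard : (Fintype.card ((Fin n → Bool) × (Fin m → Bool)) : ℝ) = 2 ^ (n + m) := by
    simp [Fintype.card_prod, Fintype.card_fun, pow_add]
  rw [uniformVariance, hcard, energy_mean, energy_sq]
  have h2 : (2 : ℝ) ^ (n + m) ≠ 0 := by positivity
  field_simp
  ring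

/-- For a gauged RBM (the all-ones configuration is a ground state) with ground
state energy `E0 = −∑ i j, W i j < 0`, any learning rate
`0 < γ < −2 E0/(n m)` makes the mode-informed update `W' i j = W i j − γ`
strictly decrease the variance of the energies over all configurations. -/
theorem rbm_variance_strict_decrease (n m : ℕ) (hn : 0 < n) (hm : 0 < m)
    (W : Fin n → Fin m → ℝ) (γ : ℝ)
    (hgauge : ∀ s : (Fin n → Bool) × (Fin m → Bool),
      rbmEnergyB n m W (fun _ => true, fun _ => true) ≤ rbmEnergyB n m W s)
    (hE0 : -(∑ i : Fin n, ∑ j : Fin m, W i j) < 0)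
    (hγpos : 0 < γ)
    (hγub : γ < -2 * (-(∑ i : Fin n, ∑ j : Fin m, W i j)) / (n * m)) :
    uniformVariance n m (rbmEnergyB n m (fun i j => W i j - γ)) <
      uniformVariance n m (rbmEnergyB n m W) := by
  rw [variance_eq, variance_eq]
  set S : ℝ := ∑ i : Fin n, ∑ j : Fin m, W i j with hS
  have hnm : (0 : ℝ) < (n : ℝ) * m := by
    have : (0 : ℕ) < n * m := Nat.mul_pos hn hm
    exact_mod_cast this
  have hub : γ * ((n : ℝ) * m) < 2 * S := by
    rw [lt_div_iff₀ hnm] at hγub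
    linarith
  have hexp : ∑ i : Fin n, ∑ j : Fin m, (W i j - γ) ^ 2 =
      (∑ i : Fin n, ∑ j : Fin m, (W i j) ^ 2) - 2 * γ * S + ((n : ℝ) * m) * γ ^ 2 := by
    have h1 : ∀ i : Fin n, ∀ j : Fin m,
        (W i j - γ) ^ 2 = (W i j) ^ 2 - 2 * γ * W i j + γ ^ 2 := fun i j => by ring
    simp only [h1, Finset.sum_add_distrib, Finset.sum_sub_distrib, ← Finset.mul_sum,
      Finset.sum_const, Finset.card_univ, Fintype.card_fin, nsmul_eq_mul]
    rw [hS]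
    ring
  rw [hexp]
  nlinarith [mul_pos hγpos hnm]
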